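/- arXiv:2410.03247 — 8 statements merged into one kernel-verified Lean document; each statement's English description precedes it below -/
import Mathlib

section
/- Let d ≥ 1 and N ≥ 1 be integers and let P(X) = a₀ + a₁X + ⋯ + a_{d−1}X^{d−1} be a polynomial in ℤ[X] of degree at most d−1. If X^d − 1 divides P(X)^N − 1 in ℤ[X], then P(X) = ± X^{k·d/d′} for some k ∈ {0, 1, …, d′−1}, where d′ = gcd(d, N). -/
/-! For every `d`-th root of unity `ζ`, `P(ζ)` is an `N`-th root of unity, so `|P(ζ)| = 1`.
Parseval's identity over the `d`-th roots of unity then gives `∑ aᵢ² = 1`, hence `P = ±Xᵐ`.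
Evaluating at a primitive `d`-th root of unity forces `d ∣ m N`, i.e. `d / gcd(d, N) ∣ m`. -/

open Polynomial Finset ComplexConjugate

namespace IsPrimitiveRoot

theorem geom_sum_pow_mul_inv_pow {K : Type*} [Field K] {μ : K} {d i i' : ℕ}
    (hμ : IsPrimitiveRoot μ d) (hi : i < d) (hi' : i' < d) :
    ∑ j ∈ range d, (μ ^ i * μ⁻¹ ^ i') ^ j = if i = i' then (d : K) else 0 := by
  have hμ0 : μ ≠ 0 := hμ.ne_zero (by omega)
  split_ifs with h
  · subst h
    simp [mul_inv_cancel₀ (pow_ne_zero i hμ0)]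
  · have hne : μ ^ i * μ⁻¹ ^ i' ≠ 1 := by
      rw [inv_pow, ← div_eq_mul_inv, Ne, div_eq_one_iff_eq (pow_ne_zero _ hμ0)]
      exact fun heq => h (hμ.pow_inj hi hi' heq)
    have hpow : (μ ^ i * μ⁻¹ ^ i') ^ d = 1 := by
      rw [mul_pow, ← pow_mul, ← pow_mul, mul_comm i, mul_comm i', pow_mul, pow_mul,
        hμ.pow_eq_one, hμ.inv.pow_eq_one, one_pow, one_pow, one_mul]
    rw [geom_sum_eq hne, hpow, sub_self, zero_div]

theorem sum_sq_norm_eval_pow {μ : ℂ} {d : ℕ} (hμ : IsPrimitiveRoot μ d) {Q : ℂ[X]}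
    (hQ : Q.natDegree < d) :
    ∑ j ∈ range d, ‖Q.eval (μ ^ j)‖ ^ 2 = d * ∑ i ∈ range d, ‖Q.coeff i‖ ^ 2 := by
  have hconj : conj μ = μ⁻¹ :=
    (Complex.inv_eq_conj (hμ.norm'_eq_one (by omega))).symm
  apply Complex.ofReal_injective
  push_cast
  simp_rw [← Complex.mul_conj']
  calc ∑ j ∈ range d, Q.eval (μ ^ j) * conj (Q.eval (μ ^ j))
      = ∑ j ∈ range d, ∑ i ∈ range d, ∑ i' ∈ range d,
          Q.coeff i * conj (Q.coeff i') * (μ ^ i * μ⁻¹ ^ i') ^ j := by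
        simp_rw [eval_eq_sum_range' hQ, map_sum, map_mul, map_pow, hconj, sum_mul_sum]
        refine sum_congr rfl fun j _ => sum_congr rfl fun i _ => sum_congr rfl fun i' _ => ?_
        ring
    _ = ∑ i ∈ range d, ∑ i' ∈ range d,
          Q.coeff i * conj (Q.coeff i') * ∑ j ∈ range d, (μ ^ i * μ⁻¹ ^ i') ^ j := by
        simp_rw [mul_sum]
        rw [sum_comm]
        exact sum_congr rfl fun i _ => sum_comm
    _ = d * ∑ i ∈ range d, Q.coeff i * conj (Q.coeff i) := by
        rw [mul_sum]
        refine sum_congr rfl fun i hi => ?_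
        rw [sum_congr rfl fun i' hi' => by
          rw [hμ.geom_sum_pow_mul_inv_pow (mem_range.1 hi) (mem_range.1 hi'), mul_ite, mul_zero],
          sum_ite_eq, if_pos hi]
        ring

end IsPrimitiveRoot

namespace Polynomial

theorem aeval_pow_eq_one_of_X_pow_sub_one_dvd {R A : Type*} [CommRing R] [CommRing A]
    [Algebra R A] {d N : ℕ} {P : R[X]} (h : X ^ d - 1 ∣ P ^ N - 1) {ζ : A} (hζ : ζ ^ d = 1) :
    aeval ζ P ^ N = 1 := by
  simpa [hζ, sub_eq_zero] using _root_.map_dvd (aeval ζ) h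

theorem sum_sq_coeff_eq_one_of_X_pow_sub_one_dvd {d N : ℕ} (hN : N ≠ 0) {P : ℤ[X]}
    (hdeg : P.natDegree < d) (h : X ^ d - 1 ∣ P ^ N - 1) :
    ∑ i ∈ P.support, P.coeff i ^ 2 = 1 := by
  have hd : d ≠ 0 := by omega
  obtain ⟨μ, hμ⟩ : ∃ μ : ℂ, IsPrimitiveRoot μ d := ⟨_, Complex.isPrimitiveRoot_exp d hd⟩
  set Q := P.map (algebraMap ℤ ℂ)
  have hnorm (j : ℕ) : ‖Q.eval (μ ^ j)‖ = 1 := by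
    refine Complex.norm_eq_one_of_pow_eq_one ?_ hN
    rw [eval_map_algebraMap]
    refine aeval_pow_eq_one_of_X_pow_sub_one_dvd h ?_
    rw [← pow_mul, mul_comm, pow_mul, hμ.pow_eq_one, one_pow]
  have hparseval := hμ.sum_sq_norm_eval_pow (Q := Q) (natDegree_map_le.trans_lt hdeg)
  simp only [hnorm, one_pow, sum_const, card_range, nsmul_eq_mul, mul_one, Q, coeff_map,
    eq_intCast, Complex.norm_intCast, sq_abs] at hparseval
  rw [sum_subset (supp_subset_range hdeg) fun i _ hi => by simp [notMem_support_iff.1 hi]]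
  exact_mod_cast (mul_eq_left₀ (Nat.cast_ne_zero.2 hd)).1 hparseval.symm

theorem eq_X_pow_or_eq_neg_X_pow_of_sum_sq_coeff_eq_one {P : ℤ[X]}
    (h : ∑ i ∈ P.support, P.coeff i ^ 2 = 1) : ∃ m, P = X ^ m ∨ P = -X ^ m := by
  have hcard : #P.support ≤ 1 := by
    have hle := card_nsmul_le_sum P.support (fun i => P.coeff i ^ 2) 1 fun i hi =>
      Order.one_le_iff_pos.2 (sq_pos_of_ne_zero (mem_support_iff.1 hi))
    rw [h, nsmul_one] at hle
    exact_mod_cast hle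
  have hP : P ≠ 0 := by
    rintro rfl
    simp at h
  obtain ⟨m, c, hc, rfl⟩ := card_support_eq_one.1
    (le_antisymm hcard (card_pos.2 (support_nonempty.2 hP)))
  rw [support_C_mul_X_pow m hc, sum_singleton, coeff_C_mul_X_pow, if_pos rfl, sq,
    mul_self_eq_one_iff] at h
  rcases h with rfl | rfl
  · exact ⟨m, Or.inl (by simp)⟩
  · exact ⟨m, Or.inr (by simp)⟩

theorem dvd_mul_of_X_pow_sub_one_dvd_pow_sub_one {d m N : ℕ} (hd : d ≠ 0) {P : ℤ[X]}
    (hP : P = X ^ m ∨ P = -X ^ m) (h : X ^ d - 1 ∣ P ^ N - 1) : d ∣ m * N := by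
  obtain ⟨μ, hμ⟩ : ∃ μ : ℂ, IsPrimitiveRoot μ d := ⟨_, Complex.isPrimitiveRoot_exp d hd⟩
  have hμN := aeval_pow_eq_one_of_X_pow_sub_one_dvd h hμ.pow_eq_one
  have h1N := aeval_pow_eq_one_of_X_pow_sub_one_dvd h (one_pow (M := ℂ) d)
  rw [← hμ.pow_eq_one_iff_dvd, pow_mul]
  rcases hP with rfl | rfl
  · simpa using hμN
  · simp only [map_neg, map_pow, aeval_X, one_pow] at hμN h1N
    rwa [neg_pow, h1N, one_mul] at hμN

end Polynomial

theorem Nat.exists_lt_gcd_eq_mul_div_gcd {d m N : ℕ} (hm : m < d) (h : d ∣ m * N) :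
    ∃ k < d.gcd N, m = k * (d / d.gcd N) := by
  have hg : 0 < d.gcd N := Nat.gcd_pos_of_pos_left _ (by omega)
  obtain ⟨k, rfl⟩ : d / d.gcd N ∣ m := by
    refine (Nat.coprime_div_gcd_div_gcd hg).dvd_of_dvd_mul_right ?_
    rw [← Nat.mul_div_assoc _ (Nat.gcd_dvd_right d N)]
    exact Nat.div_dvd_div (Nat.gcd_dvd_left d N) h
  refine ⟨k, Nat.lt_of_mul_lt_mul_right (a := d / d.gcd N) ?_, mul_comm _ _⟩
  rwa [Nat.mul_div_cancel' (Nat.gcd_dvd_left d N), mul_comm]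

theorem stmt_0 (d N : ℕ) (hd : 1 ≤ d) (hN : 1 ≤ N) (P : Polynomial ℤ)
    (hdeg : P.natDegree ≤ d - 1)
    (hdvd : (Polynomial.X ^ d - 1) ∣ (P ^ N - 1)) :
    ∃ k < Nat.gcd d N,
      P = Polynomial.X ^ (k * (d / Nat.gcd d N)) ∨
      P = -Polynomial.X ^ (k * (d / Nat.gcd d N)) := by
  have hlt : P.natDegree < d := by omega
  obtain ⟨m, hm⟩ := eq_X_pow_or_eq_neg_X_pow_of_sum_sq_coeff_eq_one
    (sum_sq_coeff_eq_one_of_X_pow_sub_one_dvd (by omega) hlt hdvd)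
  have hmd : m < d := by
    rcases hm with rfl | rfl <;> simpa using hlt
  obtain ⟨k, hk, rfl⟩ := Nat.exists_lt_gcd_eq_mul_div_gcd hmd
    (dvd_mul_of_X_pow_sub_one_dvd_pow_sub_one (by omega) hm hdvd)
  exact ⟨k, hk, hm⟩
end

section
/- Let d ≥ 1, let ζ ∈ ℂ be a primitive d-th root of unity, and let ξ₀, …, ξ_{d−1} ∈ ℂ be (not necessarily primitive) N-th roots of unity. Suppose that for every i ∈ {0, …, d−1} the complex number a_i := (ξ₀ + ζ^i ξ₁ + ζ^{2i} ξ₂ + ⋯ + ζ^{(d−1)i} ξ_{d−1})/d is an integer. Then each a_i lies in {−1, 0, 1}, and at most one of the a_i is nonzero. -/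
open Finset Complex

private lemma orth_aux {d : ℕ} (hd : 1 ≤ d) {ζ : ℂ} (hζ : IsPrimitiveRoot ζ d)
    (j k : Fin d) :
    ∑ i : Fin d, ζ ^ ((i : ℕ) * (j : ℕ)) * (starRingEnd ℂ) (ζ ^ ((i : ℕ) * (k : ℕ))) =
      if j = k then (d : ℂ) else 0 := by
  have hd0 : d ≠ 0 := by omega
  have hzd : ζ ^ d = 1 := hζ.pow_eq_one
  have habs : ‖ζ‖ = 1 := Complex.norm_eq_one_of_pow_eq_one hzd hd0
  have hconj : ∀ n : ℕ, (starRingEnd ℂ) (ζ ^ n) = ζ ^ (-(n : ℤ)) := by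
    intro n
    rw [map_pow, ← Complex.inv_eq_conj habs, ← zpow_natCast (ζ⁻¹) n, inv_zpow, ← zpow_neg]
  have hterm : ∀ i : Fin d,
      ζ ^ ((i : ℕ) * (j : ℕ)) * (starRingEnd ℂ) (ζ ^ ((i : ℕ) * (k : ℕ)))
        = (ζ ^ ((j : ℤ) - (k : ℤ))) ^ (i : ℕ) := by
    intro i
    rw [hconj, ← zpow_natCast ζ ((i : ℕ) * (j : ℕ)), ← zpow_add₀ (hζ.ne_zero hd0),
      ← zpow_natCast (ζ ^ ((j : ℤ) - (k : ℤ))) (i : ℕ), ← zpow_mul]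
    congr 1
    push_cast
    ring
  simp only [hterm]
  rw [Fin.sum_univ_eq_sum_range (fun i => (ζ ^ ((j : ℤ) - (k : ℤ))) ^ i) d]
  by_cases hjk : j = k
  · subst hjk
    simp
  · rw [if_neg hjk]
    set w : ℂ := ζ ^ ((j : ℤ) - (k : ℤ)) with hw
    have hw1 : w ≠ 1 := by
      intro h
      have hdvd : (d : ℤ) ∣ ((j : ℤ) - (k : ℤ)) := (hζ.zpow_eq_one_iff_dvd _).mp h
      have hj := j.isLt
      have hk := k.isLt
      have : (j : ℤ) - (k : ℤ) = 0 :=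
        Int.eq_zero_of_abs_lt_dvd hdvd (by rw [abs_lt]; omega)
      exact hjk (Fin.ext (by omega))
    have hwd : w ^ d = 1 := by
      rw [hw, ← zpow_natCast, ← zpow_mul, mul_comm, zpow_mul, zpow_natCast, hzd, one_zpow]
    rw [geom_sum_eq hw1, hwd, sub_self, zero_div]

private lemma abs_one_of_pow {z : ℂ} {n : ℕ} (hn : n ≠ 0) (h : z ^ n = 1) :
    z * (starRingEnd ℂ) z = 1 := by
  have habs : ‖z‖ = 1 := Complex.norm_eq_one_of_pow_eq_one h hn
  rw [Complex.mul_conj]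
  rw [Complex.normSq_eq_norm_sq]
  simp [Complex.norm_def] at habs ⊢
  rw [habs]
  norm_num

theorem stmt_1 (d N : ℕ) (hd : 1 ≤ d) (hN : 1 ≤ N) (ζ : ℂ)
    (hζ : IsPrimitiveRoot ζ d) (ξ : Fin d → ℂ) (hξ : ∀ j, ξ j ^ N = 1)
    (a : Fin d → ℂ)
    (ha : ∀ i : Fin d, a i = (∑ j : Fin d, ζ ^ ((i : ℕ) * (j : ℕ)) * ξ j) / d)
    (hint : ∀ i : Fin d, ∃ m : ℤ, a i = (m : ℂ)) :
    (∀ i : Fin d, a i = -1 ∨ a i = 0 ∨ a i = 1) ∧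
      ∀ i j : Fin d, a i ≠ 0 → a j ≠ 0 → i = j := by
  choose m hm using hint
  have hd0 : d ≠ 0 := by omega
  have hdC : (d : ℂ) ≠ 0 := Nat.cast_ne_zero.mpr hd0
  have hξc : ∀ j : Fin d, ξ j * (starRingEnd ℂ) (ξ j) = 1 := fun j =>
    abs_one_of_pow (by omega) (hξ j)
  -- Parseval
  have step : ∑ i : Fin d, a i * (starRingEnd ℂ) (a i) = 1 := by
    have expand : ∀ i : Fin d, a i * (starRingEnd ℂ) (a i)
        = (∑ j : Fin d, ∑ k : Fin d,
            (ζ ^ ((i : ℕ) * (j : ℕ)) * (starRingEnd ℂ) (ζ ^ ((i : ℕ) * (k : ℕ)))) *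
              (ξ j * (starRingEnd ℂ) (ξ k))) / ((d : ℂ) * d) := by
      intro i
      rw [ha i, map_div₀, map_sum, map_natCast, div_mul_div_comm, Finset.sum_mul_sum]
      congr 1
      refine Finset.sum_congr rfl fun j _ => Finset.sum_congr rfl fun k _ => ?_
      rw [map_mul]
      ring
    calc ∑ i : Fin d, a i * (starRingEnd ℂ) (a i)
        = (∑ i : Fin d, ∑ j : Fin d, ∑ k : Fin d,
            (ζ ^ ((i : ℕ) * (j : ℕ)) * (starRingEnd ℂ) (ζ ^ ((i : ℕ) * (k : ℕ)))) *
              (ξ j * (starRingEnd ℂ) (ξ k))) / ((d : ℂ) * d) := by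
          simp only [expand]
          rw [← Finset.sum_div]
      _ = (∑ j : Fin d, ∑ k : Fin d,
            (∑ i : Fin d, ζ ^ ((i : ℕ) * (j : ℕ)) * (starRingEnd ℂ) (ζ ^ ((i : ℕ) * (k : ℕ)))) *
              (ξ j * (starRingEnd ℂ) (ξ k))) / ((d : ℂ) * d) := by
          congr 1
          rw [Finset.sum_comm]
          refine Finset.sum_congr rfl fun j _ => ?_
          rw [Finset.sum_comm]
          refine Finset.sum_congr rfl fun k _ => ?_
          rw [Finset.sum_mul]
      _ = (∑ j : Fin d, ∑ k : Fin d,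
            (if j = k then (d : ℂ) else 0) * (ξ j * (starRingEnd ℂ) (ξ k))) / ((d : ℂ) * d) := by
          congr 1
          refine Finset.sum_congr rfl fun j _ => Finset.sum_congr rfl fun k _ => ?_
          rw [orth_aux hd hζ j k]
      _ = 1 := by
          have : ∀ j : Fin d, ∑ k : Fin d,
              (if j = k then (d : ℂ) else 0) * (ξ j * (starRingEnd ℂ) (ξ k)) = (d : ℂ) := by
            intro j
            rw [Finset.sum_eq_single j]
            · rw [if_pos rfl, hξc j, mul_one]
            · intro k _ hk
              rw [if_neg (Ne.symm hk), zero_mul]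
            · intro h
              exact absurd (Finset.mem_univ j) h
          rw [Finset.sum_congr rfl fun j _ => this j]
          simp only [Finset.sum_const, Finset.card_univ, Fintype.card_fin, nsmul_eq_mul]
          field_simp
  -- integer Parseval
  have hsum : ∑ i : Fin d, (m i) ^ 2 = 1 := by
    have hC : ((∑ i : Fin d, (m i) ^ 2 : ℤ) : ℂ) = 1 := by
      push_cast
      rw [← step]
      refine Finset.sum_congr rfl fun i _ => ?_
      rw [hm i, map_intCast, sq]
    exact_mod_cast hC
  have hle : ∀ i : Fin d, (m i) ^ 2 ≤ 1 := by
    intro i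
    calc (m i) ^ 2 ≤ ∑ i : Fin d, (m i) ^ 2 :=
          Finset.single_le_sum (fun i _ => sq_nonneg (m i)) (Finset.mem_univ i)
      _ = 1 := hsum
  constructor
  · intro i
    have h := hle i
    have hb1 : -1 ≤ m i := by nlinarith
    have hb2 : m i ≤ 1 := by nlinarith
    have : m i = -1 ∨ m i = 0 ∨ m i = 1 := by omega
    rcases this with h' | h' | h' <;> rw [hm i, h'] <;> norm_num
  · intro i j hi hj
    by_contra hij
    have hmi : m i ≠ 0 := fun h => hi (by rw [hm i, h]; norm_num)
    have hmj : m j ≠ 0 := fun h => hj (by rw [hm j, h]; norm_num)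
    have h1 : 1 ≤ (m i) ^ 2 := by rcases lt_or_gt_of_ne hmi with h | h <;> nlinarith
    have h2 : 1 ≤ (m j) ^ 2 := by rcases lt_or_gt_of_ne hmj with h | h <;> nlinarith
    have hsub : ∑ k ∈ ({i, j} : Finset (Fin d)), (m k) ^ 2 ≤ ∑ k : Fin d, (m k) ^ 2 :=
      Finset.sum_le_sum_of_subset_of_nonneg (Finset.subset_univ _)
        (fun k _ _ => sq_nonneg (m k))
    rw [Finset.sum_pair hij] at hsub
    omega
end

section
/- Let d ≥ 1 and let w ∈ GL_d(ℤ) be the cyclic permutation matrix corresponding to the cycle 1 ↦ 2 ↦ ⋯ ↦ d ↦ 1. If A ∈ GL_d(ℤ) has finite order and commutes with w, then A = w^k or A = −w^k for some k ∈ {0, 1, …, d−1}. -/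
/-!
Commuting with the cyclic permutation matrix `w` makes `A` circulant, `A i j = a (j - i)`, so
`tr (A w^m) = d a_k` when `m ≡ -k`. Since `A w^m` again has finite order, its eigenvalues are roots
of unity and `|tr (A w^m)| ≤ d`; hence every nonzero `a_k` is `±1`. For such a `k` the matrix
`±A w^m` has finite order and trace `d`, so all its eigenvalues equal `1`. It is then unipotent and
also semisimple (it is killed by the separable polynomial `X^N - 1`), so it is the identity, i.e.
`A = ±w^k`.
-/

/-- The `d × d` integer permutation matrix of the cycle `1 ↦ 2 ↦ ⋯ ↦ d ↦ 1`. -/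
noncomputable def cycleMatrix (d : ℕ) : Matrix (Fin d) (Fin d) ℤ :=
  (finRotate d).permMatrix ℤ

open Polynomial

theorem Complex.multiset_eq_one_of_norm_le_one_of_sum_eq_card {s : Multiset ℂ}
    (hs : ∀ z ∈ s, ‖z‖ ≤ 1) (hsum : s.sum = s.card) : ∀ z ∈ s, z = 1 := by
  have hre : ∀ z ∈ s, z.re ≤ 1 := fun z hz => (re_le_norm z).trans (hs z hz)
  have hdefect : (s.map fun z => 1 - z.re).sum = 0 := by
    have : (s.map re).sum = s.card := by
      simpa [hsum] using (reAddGroupHom.map_multiset_sum s).symm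
    rw [Multiset.sum_map_sub, this]
    simp
  intro z hz
  have hz_re : z.re = 1 := by
    have := Multiset.all_zero_of_le_zero_le_of_sum_eq_zero
      (by simpa using hre) hdefect (1 - z.re) (Multiset.mem_map_of_mem _ hz)
    linarith
  have hz_im : z.im = 0 :=
    abs_re_eq_norm.1 (le_antisymm (abs_re_le_norm z) (by rw [hz_re, abs_one]; exact hs z hz))
  exact ext hz_re hz_im

namespace Matrix

variable {n R : Type*} [Fintype n] [DecidableEq n]

section Complex

variable {B : Matrix n n ℂ} {N : ℕ}

theorem norm_eq_one_of_mem_roots_charpoly (hN : N ≠ 0) (hB : B ^ N = 1) {t : ℂ}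
    (ht : t ∈ B.charpoly.roots) : ‖t‖ = 1 := by
  have hspec := spectrum.pow_mem_pow B N (mem_spectrum_of_isRoot_charpoly (isRoot_of_mem_roots ht))
  rw [hB, mem_spectrum_iff_isRoot_charpoly, charpoly_one, IsRoot, eval_pow, eval_sub, eval_X,
    eval_one] at hspec
  exact Complex.norm_eq_one_of_pow_eq_one (sub_eq_zero.1 (pow_eq_zero_iff'.1 hspec).1) hN

theorem card_roots_charpoly (B : Matrix n n ℂ) : B.charpoly.roots.card = Fintype.card n := by
  rw [splits_iff_card_roots.1 (IsAlgClosed.splits _), charpoly_natDegree_eq_dim]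

theorem norm_trace_le_card_of_pow_eq_one (hN : N ≠ 0) (hB : B ^ N = 1) :
    ‖B.trace‖ ≤ Fintype.card n := by
  rw [trace_eq_sum_roots_charpoly, ← card_roots_charpoly B, ← nsmul_one,
    ← Multiset.card_map (‖·‖)]
  refine (norm_multiset_sum_le _).trans (Multiset.sum_le_card_nsmul _ _ ?_)
  simp only [Multiset.mem_map]
  rintro _ ⟨t, ht, rfl⟩
  exact (norm_eq_one_of_mem_roots_charpoly hN hB ht).le

theorem isSemisimple_toLinAlgEquiv'_of_pow_eq_one (hN : N ≠ 0) (hB : B ^ N = 1) :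
    Module.End.IsSemisimple (toLinAlgEquiv' B) := by
  refine Module.End.isSemisimple_of_squarefree_aeval_eq_zero
    (separable_X_pow_sub_C (1 : ℂ) (Nat.cast_ne_zero.2 hN) one_ne_zero).squarefree ?_
  simp [aeval_algEquiv, hB]

theorem eq_one_of_pow_eq_one_of_trace_eq_card (hN : N ≠ 0) (hB : B ^ N = 1)
    (htr : B.trace = Fintype.card n) : B = 1 := by
  have hroots : B.charpoly.roots = Multiset.replicate (Fintype.card n) 1 := by
    refine Multiset.eq_replicate.2 ⟨card_roots_charpoly B, ?_⟩
    refine Complex.multiset_eq_one_of_norm_le_one_of_sum_eq_card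
      (fun t ht => (norm_eq_one_of_mem_roots_charpoly hN hB ht).le) ?_
    rw [← trace_eq_sum_roots_charpoly, htr, card_roots_charpoly]
  have hcharpoly : B.charpoly = (X - 1) ^ Fintype.card n := by
    rw [(IsAlgClosed.splits _).eq_prod_roots_of_monic B.charpoly_monic, hroots]
    simp
  have hnil : IsNilpotent (toLinAlgEquiv' B - 1) := by
    refine ⟨Fintype.card n, ?_⟩
    have := aeval_self_charpoly B
    rw [hcharpoly] at this
    rw [← map_one toLinAlgEquiv', ← map_sub, ← map_pow]
    simpa using congrArg toLinAlgEquiv' this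
  have hss : Module.End.IsSemisimple (toLinAlgEquiv' B - 1) := by
    have := (isSemisimple_toLinAlgEquiv'_of_pow_eq_one hN hB).aeval (X - 1)
    rwa [map_sub, aeval_X, map_one] at this
  rw [← toLinAlgEquiv'.injective.eq_iff, map_one, ← sub_eq_zero]
  exact Module.End.eq_zero_of_isNilpotent_isSemisimple hnil hss

end Complex

theorem abs_trace_le_card_of_pow_eq_one {B : Matrix n n ℤ} {N : ℕ} (hN : N ≠ 0)
    (hB : B ^ N = 1) : |B.trace| ≤ Fintype.card n := by
  have := norm_trace_le_card_of_pow_eq_one hN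
    (B := (Int.castRingHom ℂ).mapMatrix B) (by rw [← map_pow, hB, map_one])
  rw [RingHom.mapMatrix_apply, ← AddMonoidHom.map_trace, eq_intCast, Complex.norm_intCast] at this
  exact_mod_cast this

theorem eq_smul_one_of_pow_eq_one_of_trace_eq {B : Matrix n n ℤ} {N : ℕ} {u : ℤ} (hu : IsUnit u)
    (hN : N ≠ 0) (hB : B ^ N = 1) (htr : B.trace = u * Fintype.card n) : B = u • 1 := by
  have huu : u * u = 1 := Int.isUnit_mul_self hu
  have hpow : ((Int.castRingHom ℂ).mapMatrix (u • B)) ^ (2 * N) = 1 := by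
    rw [← map_pow, _root_.smul_pow, pow_mul, sq, huu, one_pow, pow_mul', hB, one_pow, one_smul,
      map_one]
  have hone := eq_one_of_pow_eq_one_of_trace_eq_card (by omega) hpow (by
    rw [RingHom.mapMatrix_apply, ← AddMonoidHom.map_trace, trace_smul, htr, smul_eq_mul,
      ← mul_assoc, huu, one_mul, eq_intCast, Int.cast_natCast])
  have hinj : Function.Injective ((Int.castRingHom ℂ).mapMatrix : Matrix n n ℤ →+* _) :=
    map_injective Int.cast_injective
  rw [← map_one (Int.castRingHom ℂ).mapMatrix, hinj.eq_iff] at hone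
  rw [← hone, smul_smul, huu, one_smul]

theorem permMatrix_pow [Semiring R] (σ : Equiv.Perm n) (k : ℕ) :
    (σ ^ k).permMatrix R = σ.permMatrix R ^ k := by
  induction k with
  | zero => simp
  | succ k ih => rw [pow_succ, permMatrix_mul, ih, pow_succ']

theorem commute_permMatrix_iff [Semiring R] {A : Matrix n n R} {σ : Equiv.Perm n} :
    Commute A (σ.permMatrix R) ↔ ∀ i j, A (σ i) (σ j) = A i j := by
  rw [Commute, SemiconjBy, PEquiv.mul_toMatrix_toPEquiv, PEquiv.toMatrix_toPEquiv_mul,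
    ← Matrix.ext_iff]
  simp only [submatrix_apply, id]
  exact ⟨fun h i j => by simpa using (h i (σ j)).symm,
    fun h i j => by simpa using (h i (σ.symm j)).symm⟩

theorem trace_mul_permMatrix [Semiring R] (A : Matrix n n R) (σ : Equiv.Perm n) :
    (A * σ.permMatrix R).trace = ∑ i, A (σ i) i := by
  rw [PEquiv.mul_toMatrix_toPEquiv, trace]
  exact (Equiv.sum_comp σ fun i => A i (σ.symm i)).symm.trans (by simp)

end Matrix

open Fin.NatCast Fin.CommRing

theorem finRotate_pow_apply {d : ℕ} [NeZero d] (k : ℕ) (i : Fin d) :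
    (finRotate d ^ k) i = i + k := by
  induction k with
  | zero => simp
  | succ k ih => rw [pow_succ', Equiv.Perm.mul_apply, ih, finRotate_apply]; push_cast; ring

theorem cycleMatrix_pow (d k : ℕ) : cycleMatrix d ^ k = (finRotate d ^ k).permMatrix ℤ :=
  (Matrix.permMatrix_pow _ k).symm

theorem cycleMatrix_pow_self (d : ℕ) [NeZero d] : cycleMatrix d ^ d = 1 := by
  rw [cycleMatrix_pow, ← Matrix.permMatrix_one]
  congr
  ext i
  simp [finRotate_pow_apply]

theorem apply_add_add_of_commute_cycleMatrix {d : ℕ} [NeZero d] {A : Matrix (Fin d) (Fin d) ℤ}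
    (hA : Commute A (cycleMatrix d)) (t i j : Fin d) : A (i + t) (j + t) = A i j := by
  have := Matrix.commute_permMatrix_iff.1 (cycleMatrix_pow d t.val ▸ hA.pow_right t.val) i j
  simpa [finRotate_pow_apply] using this

theorem trace_mul_cycleMatrix_pow {d : ℕ} [NeZero d] {A : Matrix (Fin d) (Fin d) ℤ}
    (hA : Commute A (cycleMatrix d)) (m : ℕ) :
    (A * cycleMatrix d ^ m).trace = d * A m 0 := by
  have hdiag (i : Fin d) : A (i + m) i = A m 0 := by
    simpa [add_comm] using apply_add_add_of_commute_cycleMatrix hA i m 0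
  simp [cycleMatrix_pow, Matrix.trace_mul_permMatrix, finRotate_pow_apply, hdiag]

theorem trace_mul_cycleMatrix_pow_sub {d : ℕ} [NeZero d] {A : Matrix (Fin d) (Fin d) ℤ}
    (hA : Commute A (cycleMatrix d)) (k : Fin d) :
    (A * cycleMatrix d ^ (d - k.val)).trace = d * A 0 k := by
  have hk : ((d - k.val : ℕ) : Fin d) + k = 0 := by
    nth_rw 2 [← Fin.cast_val_eq_self k]
    rw [← Nat.cast_add, Nat.sub_add_cancel k.2.le, Fin.natCast_self]
  rw [trace_mul_cycleMatrix_pow hA, ← apply_add_add_of_commute_cycleMatrix hA k, hk, zero_add]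

theorem cycleMatrix_pow_sub_mul_pow {d : ℕ} [NeZero d] (k : Fin d) :
    cycleMatrix d ^ (d - k.val) * cycleMatrix d ^ k.val = 1 := by
  rw [← pow_add, Nat.sub_add_cancel k.2.le, cycleMatrix_pow_self]

theorem stmt_2_general (d : ℕ) (hd : 1 ≤ d) (A : Matrix (Fin d) (Fin d) ℤ)
    (hfin : ∃ N : ℕ, 0 < N ∧ A ^ N = 1)
    (hcomm : A * cycleMatrix d = cycleMatrix d * A) :
    ∃ k < d, A = cycleMatrix d ^ k ∨ A = -(cycleMatrix d ^ k) := by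
  have : NeZero d := ⟨by omega⟩
  obtain ⟨N, hN, hAN⟩ := hfin
  obtain ⟨k, hk⟩ : ∃ k, A 0 k ≠ 0 := by
    by_contra! hrow
    exact (A.isUnit_iff_isUnit_det.1 (.of_pow_eq_one hAN hN.ne')).ne_zero
      (A.det_eq_zero_of_row_eq_zero 0 hrow)
  set B := A * cycleMatrix d ^ (d - k.val)
  have hpow : B ^ (N * d) = 1 := by
    rw [(Commute.pow_right hcomm _).mul_pow, pow_mul, hAN, one_pow, one_mul, ← pow_mul,
      show (d - k.val) * (N * d) = d * ((d - k.val) * N) by ring, pow_mul, cycleMatrix_pow_self,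
      one_pow]
  have htr := trace_mul_cycleMatrix_pow_sub hcomm k
  have hunit : IsUnit (A 0 k) := by
    have := Matrix.abs_trace_le_card_of_pow_eq_one (by positivity) hpow
    rw [htr, abs_mul, Fintype.card_fin, Nat.abs_cast] at this
    exact Int.isUnit_iff_abs_eq.2 (le_antisymm
      (le_of_mul_le_mul_left (by simpa using this) (by positivity)) (Int.one_le_abs hk))
  have hA : A = A 0 k • cycleMatrix d ^ k.val := calc
    A = B * cycleMatrix d ^ k.val := by rw [mul_assoc, cycleMatrix_pow_sub_mul_pow, mul_one]
    _ = A 0 k • cycleMatrix d ^ k.val := by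
      rw [Matrix.eq_smul_one_of_pow_eq_one_of_trace_eq hunit (by positivity) hpow
        (by rw [htr, Fintype.card_fin, mul_comm]), smul_one_mul]
  refine ⟨k, k.2, ?_⟩
  rcases Int.isUnit_iff.1 hunit with h | h
  · exact .inl (by simpa [h] using hA)
  · exact .inr (by simpa [h] using hA)

theorem stmt_2 (d : ℕ) (hd : 1 ≤ d) (A : Matrix (Fin d) (Fin d) ℤ)
    (hA : IsUnit A)
    (hfin : ∃ N : ℕ, 0 < N ∧ A ^ N = 1)
    (hcomm : A * cycleMatrix d = cycleMatrix d * A) :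
    ∃ k < d, A = cycleMatrix d ^ k ∨ A = -(cycleMatrix d ^ k) :=
  stmt_2_general d hd A hfin hcomm
end

section
/- Let q₀ be a prime power and let 𝔽_{q₀} ⊆ 𝔽_{q₀²} be the quadratic extension of finite fields. The natural action of SL₂(𝔽_{q₀}) on the projective line ℙ¹(𝔽_{q₀²}) (by Möbius transformations on homogeneous coordinates) has exactly two orbits: ℙ¹(𝔽_{q₀}), of cardinality q₀ + 1, and its complement ℙ¹(𝔽_{q₀²}) ∖ ℙ¹(𝔽_{q₀}), of cardinality q₀² − q₀. -/
open scoped LinearAlgebra.Projectivization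

/-- The action of `GL₂(K)` on the projective line `ℙ¹(K) = ℙ K (Fin 2 → K)`,
by Möbius transformations on homogeneous coordinates. -/
noncomputable def glAct {K : Type*} [Field K] (g : Matrix.GeneralLinearGroup (Fin 2) K)
    (x : ℙ K (Fin 2 → K)) : ℙ K (Fin 2 → K) :=
  Projectivization.map
    ((Matrix.GeneralLinearGroup.toLin g).toLinearEquiv :
      (Fin 2 → K) →ₗ[K] (Fin 2 → K))
    (Matrix.GeneralLinearGroup.toLin g).toLinearEquiv.injective x

/-- The action of `SL₂(F)` on `ℙ¹(K)` for a field extension `K/F`. -/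
noncomputable def slAct {F K : Type*} [Field F] [Field K] [Algebra F K]
    (g : Matrix.SpecialLinearGroup (Fin 2) F) (x : ℙ K (Fin 2 → K)) :
    ℙ K (Fin 2 → K) :=
  glAct (Matrix.SpecialLinearGroup.toGL
    (Matrix.SpecialLinearGroup.map (algebraMap F K) g)) x

/-- The image of `ℙ¹(F)` inside `ℙ¹(K)`: the points admitting a homogeneous
representative with all coordinates in (the image of) `F`. -/
def ratPoints (F K : Type*) [Field F] [Field K] [Algebra F K] :
    Set (ℙ K (Fin 2 → K)) :=
  {x | ∃ (v : Fin 2 → K) (hv : v ≠ 0), Projectivization.mk K v hv = x ∧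
    ∀ i, v i ∈ (algebraMap F K).range}

/-!
The rational points are the image of `ℙ¹(F)` under base change of coordinates, which is injective
and `SL₂(F)`-equivariant; as `SL₂(F)` is transitive on `ℙ¹(F)`, they form a single orbit of size
`q₀ + 1`, and their complement has `(q₀² + 1) - (q₀ + 1)` points.

A non-rational point is `[z : 1]` with `(z, 1)` an `F`-basis of `K`. Writing `w = α z + β`, the
affine matrix `!![α, β; 0, 1]` sends `[z : 1]` to `[w : 1]` but has determinant `α`. Multiplication
by `μ ∈ Kˣ`, written in the basis `(z, 1)`, fixes `[z : 1]` and has determinant `N_{K/F}(μ)`; the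
norm of an extension of finite fields is surjective, so `N(μ) = α⁻¹` gives the element of `SL₂(F)`.
-/

open Projectivization Matrix
open scoped MatrixGroups

section BaseChange

variable (F K : Type*) [Field F] [Field K] [Algebra F K] (ι : Type*)

def vecBaseChange : (ι → F) →ₛₗ[algebraMap F K] (ι → K) where
  toFun u := algebraMap F K ∘ u
  map_add' u v := by ext; simp
  map_smul' c u := by ext; simp

theorem vecBaseChange_injective : Function.Injective (vecBaseChange F K ι) :=
  fun _ _ h => funext fun i => (algebraMap F K).injective (congrFun h i)

noncomputable def projBaseChange : ℙ F (ι → F) → ℙ K (ι → K) :=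
  Projectivization.map (vecBaseChange F K ι) (vecBaseChange_injective F K ι)

variable {F K ι}

theorem algebraMap_comp_ne_zero {u : ι → F} (hu : u ≠ 0) : algebraMap F K ∘ u ≠ 0 :=
  (map_ne_zero_iff _ (vecBaseChange_injective F K ι)).2 hu

theorem projBaseChange_mk {u : ι → F} (hu : u ≠ 0) :
    projBaseChange F K ι (mk F u hu) = mk K (algebraMap F K ∘ u) (algebraMap_comp_ne_zero hu) :=
  rfl

theorem projBaseChange_injective : Function.Injective (projBaseChange F K ι) := by
  intro x y hxy
  induction x using Projectivization.ind with | h u hu => ?_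
  induction y using Projectivization.ind with | h w hw => ?_
  obtain ⟨i, hi⟩ := Function.ne_iff.1 hw
  rw [projBaseChange_mk, projBaseChange_mk, mk_eq_mk_iff'] at hxy
  obtain ⟨a, ha⟩ := hxy
  have hai : a * algebraMap F K (w i) = algebraMap F K (u i) := congrFun ha i
  have ha' : a = algebraMap F K (u i / w i) := by
    rw [map_div₀, eq_div_iff (by simpa using hi)]
    exact hai
  refine (mk_eq_mk_iff' _ _ _ _ _).2 ⟨u i / w i, funext fun j => ?_⟩
  apply (algebraMap F K).injective
  simpa [ha'] using congrFun ha j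

theorem smul_projBaseChange [Fintype ι] [DecidableEq ι] (g : Matrix.SpecialLinearGroup ι F)
    (x : ℙ F (ι → F)) :
    Matrix.SpecialLinearGroup.map (algebraMap F K) g • projBaseChange F K ι x =
      projBaseChange F K ι (g • x) := by
  induction x using Projectivization.ind with | h u hu => ?_
  rw [smul_mk, projBaseChange_mk, projBaseChange_mk, smul_mk, mk_eq_mk_iff']
  refine ⟨1, funext fun i => ?_⟩
  rw [one_smul]
  exact (algebraMap F K).map_mulVec g.1 u i

end BaseChange

section RationalPoints

variable {F K : Type*} [Field F] [Field K] [Algebra F K]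

theorem range_projBaseChange : Set.range (projBaseChange F K (Fin 2)) = ratPoints F K := by
  ext x
  constructor
  · rintro ⟨y, rfl⟩
    induction y using Projectivization.ind with | h u hu => ?_
    exact ⟨_, algebraMap_comp_ne_zero hu, rfl, fun i => ⟨u i, rfl⟩⟩
  · rintro ⟨v, hv, rfl, hvF⟩
    choose u hu using hvF
    obtain rfl : v = algebraMap F K ∘ u := funext fun i => (hu i).symm
    have hu0 : u ≠ 0 := by
      rintro rfl
      exact hv (funext fun i => by simp)
    exact ⟨mk F u hu0, rfl⟩

theorem slAct_projBaseChange (g : SL(2, F)) (x : ℙ F (Fin 2 → F)) :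
    slAct g (projBaseChange F K (Fin 2) x) = projBaseChange F K (Fin 2) (g • x) :=
  smul_projBaseChange g x

theorem slAct_mem_ratPoints (g : SL(2, F)) {x : ℙ K (Fin 2 → K)}
    (hx : x ∈ ratPoints F K) : slAct g x ∈ ratPoints F K := by
  rw [← range_projBaseChange] at hx ⊢
  obtain ⟨y, rfl⟩ := hx
  exact ⟨g • y, (slAct_projBaseChange g y).symm⟩

theorem exists_slAct_eq_of_mem_ratPoints {x y : ℙ K (Fin 2 → K)} (hx : x ∈ ratPoints F K)
    (hy : y ∈ ratPoints F K) : ∃ g : SL(2, F), slAct g x = y := by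
  rw [← range_projBaseChange] at hx hy
  obtain ⟨x, rfl⟩ := hx
  obtain ⟨y, rfl⟩ := hy
  obtain ⟨g, rfl⟩ := MulAction.exists_smul_eq SL(2, F) x y
  exact ⟨g, slAct_projBaseChange g x⟩

theorem card_ratPoints [Finite F] : Nat.card (ratPoints F K) = Nat.card F + 1 := by
  rw [← range_projBaseChange, Nat.card_range_of_injective projBaseChange_injective,
    card_of_finrank_two F _ (Module.finrank_fin_fun F)]

theorem card_compl_ratPoints [Finite K] :
    Nat.card ((ratPoints F K)ᶜ : Set (ℙ K (Fin 2 → K))) = Nat.card K - Nat.card F := by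
  have : Finite F := Finite.of_injective _ (algebraMap F K).injective
  rw [Nat.card_coe_set_eq, Set.ncard_compl, ← Nat.card_coe_set_eq, card_ratPoints,
    card_of_finrank_two K _ (Module.finrank_fin_fun K)]
  omega

end RationalPoints

section NonRationalPoints

variable {F K : Type*} [Field F] [Field K] [Algebra F K]

theorem vecCons_one_ne_zero (z : K) : ![z, 1] ≠ 0 := fun h => one_ne_zero (congrFun h 1)

theorem exists_eq_mk_of_notMem_ratPoints {x : ℙ K (Fin 2 → K)} (hx : x ∉ ratPoints F K) :
    ∃ z ∉ (algebraMap F K).range, x = mk K ![z, 1] (vecCons_one_ne_zero z) := by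
  induction x using Projectivization.ind with | h v hv => ?_
  have hnotRat : ∀ w (hw : w ≠ 0), mk K v hv = mk K w hw → ¬ ∀ i, w i ∈ (algebraMap F K).range :=
    fun w hw h hwF => hx ⟨w, hw, h.symm, hwF⟩
  by_cases h1 : v 1 = 0
  · refine absurd ?_ (hnotRat ![1, 0] (fun h => one_ne_zero (congrFun h 0))
      ((mk_eq_mk_iff' _ _ _ _ _).2 ⟨v 0, by ext i; fin_cases i <;> simp [h1]⟩))
    intro i; fin_cases i <;> simp
  · have hv' : mk K v hv = mk K ![v 0 / v 1, 1] (vecCons_one_ne_zero _) :=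
      (mk_eq_mk_iff' _ _ _ _ _).2 ⟨v 1, by ext i; fin_cases i <;> simp [h1, mul_div_cancel₀]⟩
    refine ⟨v 0 / v 1, fun hz => hnotRat _ _ hv' ?_, hv'⟩
    intro i; fin_cases i <;> simp [hz]

theorem linearIndependent_vecCons_one {z : K} (hz : z ∉ (algebraMap F K).range) :
    LinearIndependent F ![z, 1] := by
  rw [linearIndependent_fin2]
  refine ⟨by simp, fun a ha => hz ⟨a, ?_⟩⟩
  simpa [Algebra.smul_def] using ha

theorem leftMulMatrix_transpose_map_mulVec {R S ι : Type*} [CommRing R] [Ring S] [Algebra R S]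
    [Fintype ι] [DecidableEq ι] (b : Module.Basis ι R S) (μ : S) :
    (Algebra.leftMulMatrix b μ)ᵀ.map (algebraMap R S) *ᵥ ⇑b = μ • ⇑b := by
  funext i
  rw [Pi.smul_apply, smul_eq_mul, ← b.sum_repr (μ * b i)]
  simp [mulVec, dotProduct, Algebra.leftMulMatrix_eq_repr_mul, Algebra.smul_def]

theorem exists_slAct_mk_eq (b : Module.Basis (Fin 2) F K) {z : K} (hb : ⇑b = ![z, 1]) (w : K)
    {μ : K} (hμ : b.repr w 0 * Algebra.norm F μ = 1) :
    ∃ g : SL(2, F),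
      slAct g (mk K ![z, 1] (vecCons_one_ne_zero z)) = mk K ![w, 1] (vecCons_one_ne_zero w) := by
  let M := !![b.repr w 0, b.repr w 1; 0, 1] * (Algebra.leftMulMatrix b μ)ᵀ
  have hdet : M.det = 1 := by
    rw [det_mul, det_transpose, ← Algebra.norm_eq_matrix_det, det_fin_two_of]
    simpa using hμ
  refine ⟨⟨M, hdet⟩, (mk_eq_mk_iff' _ _ _ _ _).2 ⟨μ, ?_⟩⟩
  have hw : w = algebraMap F K (b.repr w 0) * z + algebraMap F K (b.repr w 1) := by
    conv_lhs => rw [← b.sum_repr w]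
    simp [Fin.sum_univ_two, hb, Algebra.smul_def]
  show _ = (M.map (algebraMap F K)) *ᵥ ![z, 1]
  rw [Matrix.map_mul, ← mulVec_mulVec, ← hb, leftMulMatrix_transpose_map_mulVec, hb, mulVec_smul]
  congr 1
  ext i; fin_cases i <;> simp [mulVec, dotProduct, Fin.sum_univ_two, ← hw]

end NonRationalPoints

section FiniteFields

variable {F K : Type*} [Field F] [Field K] [Algebra F K]

theorem exists_slAct_eq_of_notMem_ratPoints [Finite K] (hFK : Module.finrank F K = 2)
    {x y : ℙ K (Fin 2 → K)} (hx : x ∉ ratPoints F K) (hy : y ∉ ratPoints F K) :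
    ∃ g : SL(2, F), slAct g x = y := by
  obtain ⟨z, hz, rfl⟩ := exists_eq_mk_of_notMem_ratPoints hx
  obtain ⟨w, hw, rfl⟩ := exists_eq_mk_of_notMem_ratPoints hy
  let b := basisOfLinearIndependentOfCardEqFinrank (linearIndependent_vecCons_one hz)
    (by simp [hFK])
  have hb : ⇑b = ![z, 1] := coe_basisOfLinearIndependentOfCardEqFinrank _ _
  have hα : b.repr w 0 ≠ 0 := by
    intro h
    refine hw ⟨b.repr w 1, ?_⟩
    conv_rhs => rw [← b.sum_repr w]
    simp [Fin.sum_univ_two, hb, h, Algebra.smul_def]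
  obtain ⟨μ, hμ⟩ := FiniteField.norm_surjective F K (b.repr w 0)⁻¹
  exact exists_slAct_mk_eq b hb w (by rw [hμ, mul_inv_cancel₀ hα])

theorem finrank_eq_two_of_card [Fintype F] [Fintype K] {q : ℕ} (hF : Fintype.card F = q)
    (hK : Fintype.card K = q ^ 2) : Module.finrank F K = 2 := by
  have h := Module.card_eq_pow_finrank (K := F) (V := K)
  rw [hF, hK] at h
  exact Nat.pow_right_injective (hF ▸ Fintype.one_lt_card) h.symm

end FiniteFields

theorem stmt_3 (q₀ : ℕ) (F K : Type*) [Field F] [Field K] [Algebra F K]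
    [Fintype F] [Fintype K]
    (hF : Fintype.card F = q₀) (hK : Fintype.card K = q₀ ^ 2) :
    (∀ (g : Matrix.SpecialLinearGroup (Fin 2) F) (x : ℙ K (Fin 2 → K)),
        x ∈ ratPoints F K → slAct g x ∈ ratPoints F K) ∧
    (∀ x ∈ ratPoints F K, ∀ y ∈ ratPoints F K,
        ∃ g : Matrix.SpecialLinearGroup (Fin 2) F, slAct g x = y) ∧
    (∀ x ∉ ratPoints F K, ∀ y ∉ ratPoints F K,
        ∃ g : Matrix.SpecialLinearGroup (Fin 2) F, slAct g x = y) ∧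
    Nat.card (ratPoints F K) = q₀ + 1 ∧
    Nat.card ((ratPoints F K)ᶜ : Set (ℙ K (Fin 2 → K))) = q₀ ^ 2 - q₀ := by
  refine ⟨fun g _ hx => slAct_mem_ratPoints g hx,
    fun _ hx _ hy => exists_slAct_eq_of_mem_ratPoints hx hy,
    fun _ hx _ hy => exists_slAct_eq_of_notMem_ratPoints (finrank_eq_two_of_card hF hK) hx hy,
    ?_, ?_⟩
  · rw [card_ratPoints, Nat.card_eq_fintype_card, hF]
  · rw [card_compl_ratPoints, Nat.card_eq_fintype_card, Nat.card_eq_fintype_card, hF, hK]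
end

section
/- Let q be an odd prime power. If A and B are invertible symmetric 2×2 matrices over 𝔽_q with det A = det B, then there exists g ∈ SL₂(𝔽_q) with ᵗg·A·g = B. -/
/-!
Over a finite field of odd order every nondegenerate binary quadratic form represents `1`: after
completing the square this is `u x² + v y² = 1`, and the value sets of `u x²` and `1 - v y²` both
have `(q + 1) / 2` elements, so they meet. If `vᵀ A v = 1`, the matrix with columns `v` and
`J A v` (`J` the rotation by a quarter turn) lies in `SL₂` and brings `A` to `diag(1, det A)`.
Hence `A` and `B` are `SL₂`-congruent to the same diagonal matrix.
-/

open Matrix Polynomial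

namespace FiniteField

variable {F : Type*} [Field F] [Fintype F]

theorem two_ne_zero_of_odd_card (hF : Odd (Fintype.card F)) : (2 : F) ≠ 0 :=
  Ring.two_ne_zero fun h ↦ by
    have := even_card_iff_char_two.mp h
    have := Nat.odd_iff.mp hF
    omega

theorem exists_mul_sq_add_mul_sq_eq (hF : Odd (Fintype.card F)) {u v : F} (hu : u ≠ 0)
    (hv : v ≠ 0) (t : F) : ∃ x y : F, u * x ^ 2 + v * y ^ 2 = t := by
  have hf : (C u * X ^ 2 : F[X]).degree = 2 := degree_C_mul_X_pow 2 hu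
  have hg : (C v * X ^ 2 - C t : F[X]).degree = 2 := by
    rw [degree_sub_C (by rw [degree_C_mul_X_pow 2 hv]; decide), degree_C_mul_X_pow 2 hv]
    rfl
  obtain ⟨x, y, hxy⟩ := exists_root_sum_quadratic hf hg (Nat.odd_iff.mp hF)
  refine ⟨x, y, ?_⟩
  simp only [eval_sub, eval_mul, eval_pow, eval_C, eval_X] at hxy
  linear_combination hxy

theorem exists_binary_form_eq (hF : Odd (Fintype.card F)) {a b c : F}
    (h : a * c - b * b ≠ 0) (t : F) : ∃ x y : F, a * x ^ 2 + 2 * b * x * y + c * y ^ 2 = t := by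
  by_cases ha : a = 0
  · have hb : b ≠ 0 := by rintro rfl; simp [ha] at h
    refine ⟨(t - c) / (2 * b), 1, ?_⟩
    field_simp [two_ne_zero_of_odd_card hF]
    rw [ha]; ring
  · -- `a (a x² + 2bxy + cy²) = (ax + by)² + (ac - b²) y²`
    obtain ⟨x, y, hxy⟩ := exists_mul_sq_add_mul_sq_eq hF ha (div_ne_zero h ha) t
    refine ⟨x - b / a * y, y, ?_⟩
    field_simp at hxy ⊢
    linear_combination hxy

end FiniteField

namespace Matrix

theorem transpose_mul_mul_eq_of_eq {n R : Type*} [Fintype n] [DecidableEq n] [CommSemiring R]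
    {A B P Q Q' : Matrix n n R} (hQ : Q * Q' = 1) (h : Pᵀ * A * P = Qᵀ * B * Q) :
    (P * Q')ᵀ * A * (P * Q') = B :=
  calc (P * Q')ᵀ * A * (P * Q') = Q'ᵀ * (Pᵀ * A * P) * Q' := by
        simp only [transpose_mul, Matrix.mul_assoc]
    _ = (Q * Q')ᵀ * B * (Q * Q') := by simp only [h, transpose_mul, Matrix.mul_assoc]
    _ = B := by rw [hQ, transpose_one, Matrix.one_mul, Matrix.mul_one]

namespace SpecialLinearGroup

theorem exists_transpose_mul_mul_eq_of_form_eq_one {R : Type*} [CommRing R] {a b c x y : R}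
    (h : a * x ^ 2 + 2 * b * x * y + c * y ^ 2 = 1) :
    ∃ P : SpecialLinearGroup (Fin 2) R,
      (P : Matrix (Fin 2) (Fin 2) R)ᵀ * !![a, b; b, c] * P = !![1, 0; 0, a * c - b * b] := by
  have hdet : (!![x, -(b * x + c * y); y, a * x + b * y] : Matrix (Fin 2) (Fin 2) R).det = 1 := by
    rw [det_fin_two_of]
    linear_combination h
  refine ⟨⟨_, hdet⟩, ?_⟩
  rw [← Matrix.ext_iff]
  simp only [neg_add_rev, mul_apply, transpose_apply, of_apply, cons_val',
    cons_val_fin_one, Fin.sum_univ_two, Fin.isValue, cons_val_zero, cons_val_one,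
    Fin.forall_fin_two]
  refine ⟨⟨?_, ?_⟩, ?_, ?_⟩
  · linear_combination h
  · ring
  · ring
  · linear_combination (a * c - b * b) * h

theorem exists_transpose_mul_mul_eq_diag_det {F : Type*} [Field F] [Fintype F]
    (hF : Odd (Fintype.card F)) {A : Matrix (Fin 2) (Fin 2) F} (hA : Aᵀ = A) (hdet : A.det ≠ 0) :
    ∃ P : SpecialLinearGroup (Fin 2) F,
      (P : Matrix (Fin 2) (Fin 2) F)ᵀ * A * P = !![1, 0; 0, A.det] := by
  have h10 : A 1 0 = A 0 1 := congrFun₂ hA 0 1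
  have hA' : A = !![A 0 0, A 0 1; A 0 1, A 1 1] := (eta_fin_two A).trans (by rw [h10])
  have hd : A.det = A 0 0 * A 1 1 - A 0 1 * A 0 1 := by rw [det_fin_two, h10]
  obtain ⟨x, y, hxy⟩ := FiniteField.exists_binary_form_eq hF (hd ▸ hdet) 1
  obtain ⟨P, hP⟩ := exists_transpose_mul_mul_eq_of_form_eq_one hxy
  rw [← hA', ← hd] at hP
  exact ⟨P, hP⟩

end SpecialLinearGroup

end Matrix

theorem stmt_5 (F : Type*) [Field F] [Fintype F] (hodd : Odd (Fintype.card F))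
    (A B : Matrix (Fin 2) (Fin 2) F)
    (hAsymm : Aᵀ = A) (hBsymm : Bᵀ = B)
    (hAunit : IsUnit A.det) (hBunit : IsUnit B.det)
    (hdet : A.det = B.det) :
    ∃ g : Matrix.SpecialLinearGroup (Fin 2) F,
      (g : Matrix (Fin 2) (Fin 2) F)ᵀ * A * (g : Matrix (Fin 2) (Fin 2) F) = B := by
  obtain ⟨P, hP⟩ :=
    SpecialLinearGroup.exists_transpose_mul_mul_eq_diag_det hodd hAsymm hAunit.ne_zero
  obtain ⟨Q, hQ⟩ :=
    SpecialLinearGroup.exists_transpose_mul_mul_eq_diag_det hodd hBsymm hBunit.ne_zero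
  refine ⟨P * Q⁻¹, transpose_mul_mul_eq_of_eq ?_ (by rw [hP, hQ, hdet])⟩
  simp [mul_adjugate]
end

section
/- Let q be an odd prime power, let 𝔽_{q²}/𝔽_q be the quadratic extension, and let σ: 𝔽_{q²} → 𝔽_{q²} be the Frobenius x ↦ x^q. If A and B are invertible 2×2 hermitian matrices over 𝔽_{q²} (i.e. σ(ᵗA) = A and σ(ᵗB) = B) with det A = det B, then there exists g ∈ SL₂(𝔽_{q²}) with σ(ᵗg)·A·g = B. -/
open Matrix

private lemma map_fin_two {K L : Type*} (f : K → L) (a b c d : K) :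
    (!![a, b; c, d]).map f = !![f a, f b; f c, f d] := by
  ext i j
  fin_cases i <;> fin_cases j <;> simp

private lemma norm_surj {q : ℕ} {K : Type*} [Field K] [Fintype K]
    (hcard : Fintype.card K = q ^ 2) (c : K) (hc : c ≠ 0) (hfix : c ^ q = c) :
    ∃ s : K, s ≠ 0 ∧ s ^ (q + 1) = c := by
  have hq2 : 2 ≤ q := by
    by_contra h
    have h2 := Fintype.one_lt_card (α := K)
    rw [hcard] at h2
    interval_cases q <;> simp_all
  letI : DecidableEq K := Classical.decEq K
  obtain ⟨g, hg⟩ := IsCyclic.exists_generator (α := Kˣ)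
  have hcardu : Nat.card Kˣ = q ^ 2 - 1 := by
    rw [Nat.card_eq_fintype_card, Fintype.card_units, hcard]
  have horder : orderOf g = (q - 1) * (q + 1) := by
    rw [orderOf_eq_card_of_forall_mem_zpowers hg, hcardu]
    obtain ⟨r, rfl⟩ := Nat.exists_eq_add_of_le hq2
    have h : (2 + r) ^ 2 = (2 + r - 1) * (2 + r + 1) + 1 := by
      have : 2 + r - 1 = 1 + r := by omega
      rw [this]; ring
    omega
  set cu : Kˣ := Units.mk0 c hc with hcu
  obtain ⟨m, hm⟩ : ∃ m : ℕ, g ^ m = cu := by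
    have := hg cu
    rwa [← mem_powers_iff_mem_zpowers, Submonoid.mem_powers_iff] at this
  have hc1 : c ^ (q - 1) = 1 := by
    have h : c ^ (q - 1) * c = 1 * c := by
      rw [← pow_succ, one_mul]
      have : q - 1 + 1 = q := by omega
      rw [this, hfix]
    exact mul_right_cancel₀ hc h
  have hcu1 : cu ^ (q - 1) = 1 := by
    ext
    push_cast [hcu]
    exact hc1
  have hdvd : (q - 1) * (q + 1) ∣ (q - 1) * m := by
    rw [← horder, Nat.mul_comm (q-1) m]
    apply orderOf_dvd_of_pow_eq_one
    rw [pow_mul, hm, hcu1]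
  have hdvd2 : (q + 1) ∣ m := (Nat.mul_dvd_mul_iff_left (by omega : 0 < q - 1)).mp hdvd
  obtain ⟨k, hk⟩ := hdvd2
  refine ⟨((g ^ k : Kˣ) : K), Units.ne_zero _, ?_⟩
  have : (g ^ k) ^ (q + 1) = cu := by
    rw [← pow_mul, mul_comm k (q+1), ← hk, hm]
  calc ((g ^ k : Kˣ) : K) ^ (q + 1) = (((g ^ k) ^ (q + 1) : Kˣ) : K) := by push_cast; ring
    _ = c := by rw [this]; simp [hcu]

private lemma auxTwoNeZero {q : ℕ} {K : Type*} [Field K] [Fintype K]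
    (hq : Odd q) (hcard : Fintype.card K = q ^ 2) : (2 : K) ≠ 0 := by
  intro h2
  obtain ⟨n, hp, hcard2⟩ := FiniteField.card K (ringChar K)
  have hdvd : ringChar K ∣ 2 :=
    (CharP.cast_eq_zero_iff K (ringChar K) 2).mp (by exact_mod_cast h2)
  have hchar2 : ringChar K = 2 := (Nat.prime_dvd_prime_iff_eq hp Nat.prime_two).mp hdvd
  rw [hchar2, hcard] at hcard2
  have h2q : 2 ∣ q ^ 2 := hcard2 ▸ dvd_pow_self 2 (by exact_mod_cast n.pos.ne')
  have h2q' := Nat.Prime.dvd_of_dvd_pow Nat.prime_two h2q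
  obtain ⟨k, rfl⟩ := hq
  omega

section Steps

variable {q : ℕ} {K : Type*} [Field K] [Fintype K]

private lemma congr_mul (σ : K →+* K) (A g h : Matrix (Fin 2) (Fin 2) K) :
    ((g * h).map ⇑σ)ᵀ * A * (g * h) = (h.map ⇑σ)ᵀ * ((g.map ⇑σ)ᵀ * A * g) * h := by
  rw [Matrix.map_mul, Matrix.transpose_mul]
  simp only [Matrix.mul_assoc]

private lemma congr_det {σ : K →+* K} {A g : Matrix (Fin 2) (Fin 2) K}
    (hg : g.det = 1) : ((g.map ⇑σ)ᵀ * A * g).det = A.det := by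
  have hdg : (g.map ⇑σ).det = σ g.det := by
    rw [← RingHom.mapMatrix_apply, ← RingHom.map_det]
  rw [Matrix.det_mul, Matrix.det_mul, Matrix.det_transpose, hdg, hg, _root_.map_one, one_mul,
    mul_one]

private lemma congr_herm {σ : K →+* K} (hσσ : ∀ x : K, σ (σ x) = x)
    {A : Matrix (Fin 2) (Fin 2) K} (hherm : (A.map ⇑σ)ᵀ = A) (g : Matrix (Fin 2) (Fin 2) K) :
    ((((g.map ⇑σ)ᵀ * A * g)).map ⇑σ)ᵀ = (g.map ⇑σ)ᵀ * A * g := by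
  have hgσσ : (g.map ⇑σ).map ⇑σ = g := by
    ext i j; simp [hσσ]
  have key : ∀ M N : Matrix (Fin 2) (Fin 2) K, ((M * N).map ⇑σ)ᵀ = (N.map ⇑σ)ᵀ * (M.map ⇑σ)ᵀ := by
    intro M N; rw [Matrix.map_mul, Matrix.transpose_mul]
  rw [key ((g.map ⇑σ)ᵀ * A) g, key _ A, hherm, Matrix.transpose_map, hgσσ,
    Matrix.transpose_transpose, Matrix.mul_assoc]

private lemma step1 {σ : K →+* K} (hq : Odd q) (hcard : Fintype.card K = q ^ 2)
    {A : Matrix (Fin 2) (Fin 2) K}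
    (hherm : (A.map ⇑σ)ᵀ = A) (hunit : IsUnit A.det) :
    ∃ g : Matrix (Fin 2) (Fin 2) K, g.det = 1 ∧ ((g.map ⇑σ)ᵀ * A * g) 0 0 ≠ 0 := by
  have h10 : σ (A 0 1) = A 1 0 := by
    conv_rhs => rw [← hherm]
    rfl
  by_cases h00 : A 0 0 = 0
  · by_cases h11 : A 1 1 = 0
    · have hb : A 0 1 ≠ 0 := by
        intro hb0
        apply hunit.ne_zero
        rw [Matrix.det_fin_two, hb0, h00, h11]
        ring
      refine ⟨!![1, 0; (A 0 1)⁻¹, 1], by simp [Matrix.det_fin_two_of], ?_⟩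
      have hσb : σ (A 0 1) ≠ 0 := (map_ne_zero σ).mpr hb
      have h2 : ((((!![1, 0; (A 0 1)⁻¹, 1]).map ⇑σ)ᵀ * A * !![1, 0; (A 0 1)⁻¹, 1] :
          Matrix (Fin 2) (Fin 2) K)) 0 0 = 2 := by
        simp [Matrix.mul_apply, Fin.sum_univ_succ, h00, h11, map_inv₀, ← h10]
        field_simp
        ring
      rw [h2]
      exact auxTwoNeZero hq hcard
    · refine ⟨!![0, 1; -1, 0], by simp [Matrix.det_fin_two_of], ?_⟩
      have h2 : ((((!![0, 1; -1, 0]).map ⇑σ)ᵀ * A * !![0, 1; -1, 0] :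
          Matrix (Fin 2) (Fin 2) K)) 0 0 = A 1 1 := by
        simp [Matrix.mul_apply, Fin.sum_univ_succ]
      rw [h2]
      exact h11
  · refine ⟨1, Matrix.det_one, ?_⟩
    rw [Matrix.map_one ⇑σ (_root_.map_zero σ) (_root_.map_one σ), Matrix.transpose_one,
      Matrix.one_mul, Matrix.mul_one]
    exact h00

private lemma step2 {σ : K →+* K} {C : Matrix (Fin 2) (Fin 2) K}
    (hherm : (C.map ⇑σ)ᵀ = C) (h00 : C 0 0 ≠ 0) :
    ∃ g : Matrix (Fin 2) (Fin 2) K, g.det = 1 ∧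
      (g.map ⇑σ)ᵀ * C * g = !![C 0 0, 0; 0, (C 0 0)⁻¹ * C.det] := by
  have h10 : σ (C 0 1) = C 1 0 := by
    conv_rhs => rw [← hherm]
    rfl
  have hfa : σ (C 0 0) = C 0 0 := by
    conv_rhs => rw [← hherm]
    rfl
  refine ⟨!![1, -((C 0 0)⁻¹ * C 0 1); 0, 1], by simp [Matrix.det_fin_two_of], ?_⟩
  have hCe : C = !![C 0 0, C 0 1; σ (C 0 1), C 1 1] := by
    rw [h10]; exact Matrix.eta_fin_two C
  have hdet : C.det = C 0 0 * C 1 1 - C 0 1 * σ (C 0 1) := by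
    rw [Matrix.det_fin_two, h10]
  rw [hdet]
  conv_lhs => rw [hCe]
  ext i j
  fin_cases i <;> fin_cases j <;>
    simp [Matrix.mul_apply, Fin.sum_univ_succ, map_inv₀, hfa] <;>
    field_simp <;> ring

private lemma step3 {σ : K →+* K} (hcard : Fintype.card K = q ^ 2)
    (hσ : ∀ x : K, σ x = x ^ q) (a e : K) (ha : a ≠ 0) (hfix : σ a = a) :
    ∃ g : Matrix (Fin 2) (Fin 2) K, g.det = 1 ∧
      (g.map ⇑σ)ᵀ * !![a, 0; 0, e] * g = !![1, 0; 0, a * e] := by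
  obtain ⟨t, ht0, ht⟩ := norm_surj hcard a ha (by rw [← hσ]; exact hfix)
  have htn : σ t * t = a := by rw [hσ, ← pow_succ, ht]
  have hσt : σ t ≠ 0 := (map_ne_zero σ).mpr ht0
  refine ⟨!![t⁻¹, 0; 0, t], by simp [Matrix.det_fin_two_of, inv_mul_cancel₀ ht0], ?_⟩
  have h1 : (σ t)⁻¹ * a * t⁻¹ = 1 := by field_simp; linear_combination -htn
  ext i j
  fin_cases i <;> fin_cases j <;>
    simp [Matrix.mul_apply, Fin.sum_univ_succ, map_inv₀, mul_assoc, h1] <;>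
    first
      | linear_combination e * htn
      | linear_combination h1 - e * htn
      | linear_combination h1
      | linear_combination -htn

end Steps


private lemma reduce {q : ℕ} {K : Type*} [Field K] [Fintype K] {σ : K →+* K}
    (hq : Odd q) (hcard : Fintype.card K = q ^ 2)
    (hσ : ∀ x : K, σ x = x ^ q) {A : Matrix (Fin 2) (Fin 2) K}
    (hherm : (A.map ⇑σ)ᵀ = A) (hunit : IsUnit A.det) :
    ∃ g : Matrix (Fin 2) (Fin 2) K, g.det = 1 ∧
      (g.map ⇑σ)ᵀ * A * g = !![1, 0; 0, A.det] := by
  have hσσ : ∀ x : K, σ (σ x) = x := by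
    intro x
    rw [hσ, hσ, ← pow_mul, show q * q = q ^ 2 from (sq q).symm, ← hcard, FiniteField.pow_card]
  obtain ⟨g₁, hg₁, h1⟩ := step1 hq hcard hherm hunit
  set C := (g₁.map ⇑σ)ᵀ * A * g₁ with hC
  have hCherm : (C.map ⇑σ)ᵀ = C := congr_herm hσσ hherm g₁
  have hCdet : C.det = A.det := congr_det hg₁
  obtain ⟨g₂, hg₂, h2⟩ := step2 hCherm h1
  have hfix : σ (C 0 0) = C 0 0 := by
    conv_rhs => rw [← hCherm]
    rfl
  obtain ⟨g₃, hg₃, h3⟩ := step3 hcard hσ (C 0 0) ((C 0 0)⁻¹ * C.det) h1 hfix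
  refine ⟨g₁ * g₂ * g₃, by rw [Matrix.det_mul, Matrix.det_mul, hg₁, hg₂, hg₃]; ring, ?_⟩
  rw [congr_mul σ A (g₁ * g₂) g₃, congr_mul σ A g₁ g₂, ← hC, h2, h3,
    mul_inv_cancel_left₀ h1, hCdet]

theorem stmt_6 (q : ℕ) (hq : Odd q) (K : Type*) [Field K] [Fintype K]
    (hcard : Fintype.card K = q ^ 2)
    (σ : K →+* K) (hσ : ∀ x : K, σ x = x ^ q)
    (A B : Matrix (Fin 2) (Fin 2) K)
    (hAherm : (A.map σ)ᵀ = A) (hBherm : (B.map σ)ᵀ = B)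
    (hAunit : IsUnit A.det) (hBunit : IsUnit B.det)
    (hdet : A.det = B.det) :
    ∃ g : Matrix.SpecialLinearGroup (Fin 2) K,
      ((g : Matrix (Fin 2) (Fin 2) K).map σ)ᵀ * A * (g : Matrix (Fin 2) (Fin 2) K) = B := by
  obtain ⟨gA, hgA, hA⟩ := reduce hq hcard hσ hAherm hAunit
  obtain ⟨gB, hgB, hB⟩ := reduce hq hcard hσ hBherm hBunit
  have hBinv : IsUnit gB.det := hgB ▸ isUnit_one
  have hdetg : (gA * gB⁻¹).det = 1 := by
    rw [Matrix.det_mul, hgA, Matrix.det_nonsing_inv, hgB]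
    simp
  refine ⟨⟨gA * gB⁻¹, hdetg⟩, ?_⟩
  show ((gA * gB⁻¹).map ⇑σ)ᵀ * A * (gA * gB⁻¹) = B
  have key : ((gB⁻¹).map ⇑σ)ᵀ * (gB.map ⇑σ)ᵀ = 1 := by
    rw [← Matrix.transpose_mul, ← Matrix.map_mul, Matrix.mul_nonsing_inv gB hBinv,
      Matrix.map_one ⇑σ (_root_.map_zero σ) (_root_.map_one σ), Matrix.transpose_one]
  calc ((gA * gB⁻¹).map ⇑σ)ᵀ * A * (gA * gB⁻¹)
      = ((gB⁻¹).map ⇑σ)ᵀ * ((gA.map ⇑σ)ᵀ * A * gA) * gB⁻¹ := congr_mul σ A gA gB⁻¹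
    _ = ((gB⁻¹).map ⇑σ)ᵀ * ((gB.map ⇑σ)ᵀ * B * gB) * gB⁻¹ := by rw [hA, hB, hdet]
    _ = B := by
        simp only [Matrix.mul_assoc]
        rw [Matrix.mul_nonsing_inv gB hBinv, Matrix.mul_one, ← Matrix.mul_assoc, key,
          Matrix.one_mul]
end

section
/- Let q be an odd prime power and let x ∈ 𝔽_q^× be such that −x is a nonsquare in 𝔽_q^×. Then the number of y ∈ 𝔽_q such that 1 + x·y² is a nonzero square in 𝔽_q equals (q+1)/2 if q ≡ 1 (mod 4), and equals (q−1)/2 if q ≡ 3 (mod 4). (In particular, 1 + x·y² is never zero.) -/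
/-!
With `χ` the quadratic character, `1 + x y²` never vanishes, so the number of `y` making it a
square is `(q + ∑ y, χ (1 + x y²)) / 2`. Counting square roots rewrites the sum as
`∑ c, (1 + χ c) χ (1 + x c)`; the part linear in `χ` vanishes and, after rescaling `c`, the rest
is `χ (-1/x)` times the Jacobi sum `J(χ, χ) = -χ (-1)`. Hence the sum is `-χ x = χ (-1) = χ₄ q`.
-/

open Finset

section QuadraticCharSums

variable {F : Type*} [Field F] [Fintype F] [DecidableEq F]

lemma sum_comp_sq_eq_sum_quadraticChar_add_one (hF : ringChar F ≠ 2)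
    (f : F → ℤ) : ∑ y, f (y ^ 2) = ∑ c, (quadraticChar F c + 1) * f c := by
  rw [← sum_fiberwise' univ (· ^ 2) f]
  refine sum_congr rfl fun c _ => ?_
  rw [sum_const, nsmul_eq_mul, ← quadraticChar_card_sqrts hF c, Set.toFinset_ofPred]

lemma sum_quadraticChar_add_mul (hF : ringChar F ≠ 2) {a : F} (ha : a ≠ 0) (b : F) :
    ∑ c, quadraticChar F (b + a * c) = 0 := by
  rw [← quadraticChar_sum_zero hF]
  exact Fintype.sum_equiv ((Equiv.mulLeft₀ a ha).trans (Equiv.addLeft b)) _ _ fun _ => rfl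

lemma sum_quadraticChar_mul_quadraticChar_add_mul (hF : ringChar F ≠ 2) {a b : F}
    (ha : a ≠ 0) (hb : b ≠ 0) :
    ∑ c, quadraticChar F c * quadraticChar F (b + a * c) = -quadraticChar F a := by
  set χ := quadraticChar F
  have hjac : jacobiSum χ χ = -χ (-1) := by
    rw [← jacobiSum_nontrivial_inv (quadraticChar_ne_one hF), (quadraticChar_isQuadratic F).inv]
  have hsub : ∑ c, χ c * χ (b + a * c) = ∑ d, χ (-(b / a) * d) * χ (b + a * (-(b / a) * d)) :=
    (Fintype.sum_equiv (Equiv.mulLeft₀ _ (neg_ne_zero.mpr (div_ne_zero hb ha))) _ _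
      fun _ => rfl).symm
  have hterm : ∀ d, χ (-(b / a) * d) * χ (b + a * (-(b / a) * d)) =
      χ (-(b / a) * b) * (χ d * χ (1 - d)) := by
    intro d
    simp only [← map_mul]
    congr 1
    field_simp
    ring
  have hsq : -(b / a) * b * -1 = a * (b / a) ^ 2 := by field_simp
  rw [hsub, Fintype.sum_congr _ _ hterm, ← mul_sum, ← jacobiSum, hjac, mul_neg, ← map_mul, hsq,
    map_mul, quadraticChar_sq_one' (div_ne_zero hb ha), mul_one]

lemma sum_quadraticChar_add_mul_sq (hF : ringChar F ≠ 2) {a b : F} (ha : a ≠ 0) (hb : b ≠ 0) :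
    ∑ y, quadraticChar F (b + a * y ^ 2) = -quadraticChar F a := by
  rw [sum_comp_sq_eq_sum_quadraticChar_add_one hF (fun c => quadraticChar F (b + a * c))]
  simp only [add_mul, one_mul, sum_add_distrib]
  rw [sum_quadraticChar_mul_quadraticChar_add_mul hF ha hb, sum_quadraticChar_add_mul hF ha,
    add_zero]

lemma sum_quadraticChar_eq_two_mul_card_isSquare_sub_card {ι : Type*} [Fintype ι] {f : ι → F}
    (hf : ∀ i, f i ≠ 0) [DecidablePred fun i => IsSquare (f i)] :
    ∑ i, quadraticChar F (f i) = 2 * #{i | IsSquare (f i)} - Fintype.card ι := by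
  have hval : ∀ i, quadraticChar F (f i) = 2 * (if IsSquare (f i) then 1 else 0) - 1 := by
    intro i
    split_ifs with h
    · rw [(quadraticChar_one_iff_isSquare (hf i)).mpr h]; norm_num
    · rw [quadraticChar_neg_one_iff_not_isSquare.mpr h]; norm_num
  simp only [hval, sum_sub_distrib, ← mul_sum, sum_boole, sum_const, card_univ, nsmul_one]

end QuadraticCharSums

theorem stmt_7 (F : Type*) [Field F] [Fintype F] (q : ℕ) (hq : Fintype.card F = q)
    (hodd : Odd q) (x : F) (hx : x ≠ 0) (hns : ¬ IsSquare (-x)) :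
    (∀ y : F, 1 + x * y ^ 2 ≠ 0) ∧
    (q % 4 = 1 →
      Nat.card {y : F | 1 + x * y ^ 2 ≠ 0 ∧ IsSquare (1 + x * y ^ 2)} = (q + 1) / 2) ∧
    (q % 4 = 3 →
      Nat.card {y : F | 1 + x * y ^ 2 ≠ 0 ∧ IsSquare (1 + x * y ^ 2)} = (q - 1) / 2) := by
  classical
  have hF : ringChar F ≠ 2 := fun h =>
    Nat.not_even_iff_odd.mpr hodd (hq ▸ Nat.even_iff.mpr (FiniteField.even_card_of_char_two h))
  have hne : ∀ y : F, 1 + x * y ^ 2 ≠ 0 := fun y h => hns ⟨x * y, by linear_combination -x * h⟩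
  have hcard : Nat.card {y : F | 1 + x * y ^ 2 ≠ 0 ∧ IsSquare (1 + x * y ^ 2)} =
      #{y | IsSquare (1 + x * y ^ 2)} := by
    simp only [ne_eq, hne, not_false_eq_true, true_and, Nat.card_eq_fintype_card,
      Fintype.card_subtype, Set.mem_ofPred_eq]
  have hχx : quadraticChar F x = -ZMod.χ₄ q :=
    calc quadraticChar F x = quadraticChar F (-1) * quadraticChar F (-x) := by
          rw [← map_mul, neg_one_mul, neg_neg]
      _ = -ZMod.χ₄ q := by
          rw [quadraticChar_neg_one hF, hq, quadraticChar_neg_one_iff_not_isSquare.mpr hns,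
            mul_neg_one]
  have hsum : 2 * (#{y | IsSquare (1 + x * y ^ 2)} : ℤ) - q = ZMod.χ₄ q := by
    rw [← hq, ← sum_quadraticChar_eq_two_mul_card_isSquare_sub_card hne,
      sum_quadraticChar_add_mul_sq hF hx one_ne_zero, hχx, neg_neg, hq]
  refine ⟨hne, fun h4 => ?_, fun h4 => ?_⟩
  · rw [ZMod.χ₄_nat_one_mod_four h4] at hsum
    omega
  · rw [ZMod.χ₄_nat_three_mod_four h4] at hsum
    omega
end

section
/- Let q be an odd prime power and n ≥ 1. Two invertible symmetric n×n matrices A, B over 𝔽_q are congruent (i.e. there exists g ∈ GL_n(𝔽_q) with ᵗg·A·g = B) if and only if det A and det B lie in the same class of 𝔽_q^× / (𝔽_q^×)², i.e. (det A)/(det B) is a square in 𝔽_q^×. -/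
/-!
Over a field of characteristic ≠ 2 a symmetric matrix is congruent to a diagonal one (take an
orthogonal basis). Over a finite field of odd order every binary form `a x² + b y²` with `a, b ≠ 0`
represents `1`, so `diag(a, b)` is congruent to `diag(1, ab)`; sweeping this across the diagonal
brings every invertible symmetric matrix to `diag(c, 1, …, 1)`. Congruence multiplies the
determinant by a nonzero square, which gives one direction and pins `c` down to `det` modulo
squares; two such normal forms whose entries `c` differ by a square factor are congruent by scaling.
-/

open Matrix Function

theorem FiniteField.exists_mul_sq_add_mul_sq_eq_one {F : Type*} [Field F] [Fintype F]
    (hF : Fintype.card F % 2 = 1) {a b : F} (ha : a ≠ 0) (hb : b ≠ 0) :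
    ∃ x y : F, a * x ^ 2 + b * y ^ 2 = 1 := by
  open Polynomial in
  obtain ⟨x, y, hxy⟩ := FiniteField.exists_root_sum_quadratic
    (f := C a * X ^ 2) (g := C b * X ^ 2 - 1) (by compute_degree!) (by compute_degree!) hF
  exact ⟨x, y, by simp at hxy; linear_combination hxy⟩

theorem Function.update_update_mul_ne_zero {M₀ : Type*} [MulZeroOneClass M₀] [NoZeroDivisors M₀]
    [NeZero (1 : M₀)] {ι : Type*} [DecidableEq ι] {d : ι → M₀} (hd : ∀ p, d p ≠ 0) (i j p : ι) :
    update (update d i 1) j (d i * d j) p ≠ 0 := by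
  simp only [update_apply]
  split_ifs <;> simp [hd]

namespace Matrix

section CommRing

variable {R : Type*} [CommRing R] {ι : Type*} [Fintype ι] [DecidableEq ι]

def Congruent (A B : Matrix ι ι R) : Prop :=
  ∃ g : Matrix ι ι R, IsUnit g.det ∧ gᵀ * A * g = B

namespace Congruent

variable {A B C : Matrix ι ι R}

theorem refl (A : Matrix ι ι R) : Congruent A A :=
  ⟨1, by simp, by simp⟩

theorem trans (hAB : Congruent A B) (hBC : Congruent B C) : Congruent A C := by
  obtain ⟨g, hg, rfl⟩ := hAB
  obtain ⟨h, hh, rfl⟩ := hBC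
  exact ⟨g * h, by simpa using hg.mul hh, by simp only [transpose_mul, Matrix.mul_assoc]⟩

theorem symm (h : Congruent A B) : Congruent B A := by
  obtain ⟨g, hg, rfl⟩ := h
  refine ⟨g⁻¹, isUnit_nonsing_inv_det g hg, ?_⟩
  rw [transpose_nonsing_inv, Matrix.mul_assoc, Matrix.mul_assoc, mul_nonsing_inv _ hg,
    Matrix.mul_one, ← Matrix.mul_assoc, nonsing_inv_mul _ (by rwa [det_transpose]), Matrix.one_mul]

theorem exists_det_eq (h : Congruent A B) : ∃ u : R, IsUnit u ∧ B.det = u ^ 2 * A.det := by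
  obtain ⟨g, hg, rfl⟩ := h
  exact ⟨g.det, hg, by rw [det_mul, det_mul, det_transpose]; ring⟩

end Congruent

theorem mul_diagonal_mul_transpose_apply (M : Matrix ι ι R) (d : ι → R) (k l : ι) :
    (M * diagonal d * Mᵀ) k l = M k ⬝ᵥ (d * M l) := by
  rw [mul_apply]
  simp only [mul_diagonal, transpose_apply, dotProduct, Pi.mul_apply]
  exact Finset.sum_congr rfl fun _ _ => by ring

end CommRing

section Field

variable {F : Type*} [Field F] {ι : Type*} [Fintype ι] [DecidableEq ι]

theorem exists_congruent_diagonal [Invertible (2 : F)] {A : Matrix ι ι F} (hA : A.IsSymm) :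
    ∃ d : ι → F, A.Congruent (diagonal d) := by
  obtain ⟨v, hv⟩ := LinearMap.BilinForm.exists_orthogonal_basis
    (LinearMap.BilinForm.isSymm_iff.1 (isSymm_toBilin'_iff_isSymm.2 hA))
  let b := v.reindex (v.indexEquiv (Pi.basisFun F ι))
  have hdiag : (LinearMap.BilinForm.toMatrix b (toBilin' A)).IsDiag := by
    intro i j hij
    rw [LinearMap.BilinForm.toMatrix_apply, Module.Basis.reindex_apply, Module.Basis.reindex_apply]
    exact hv ((Equiv.injective _).ne hij)
  refine ⟨(LinearMap.BilinForm.toMatrix b (toBilin' A)).diag, (Pi.basisFun F ι).toMatrix b,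
    isUnit_det_of_right_inverse (Module.Basis.toMatrix_mul_toMatrix_flip _ _), ?_⟩
  rw [hdiag.diagonal_diag, ← LinearMap.BilinForm.toMatrix_mul_basis_toMatrix (Pi.basisFun F ι),
    LinearMap.BilinForm.toMatrix_basisFun, LinearMap.BilinForm.toMatrix'_toBilin']

/-- Rows `i` and `j` are `x eᵢ + y eⱼ` and `-dⱼ y eᵢ + dᵢ x eⱼ`: they are orthogonal for `diag d`,
of squared lengths `dᵢ x² + dⱼ y²` and `dᵢ dⱼ (dᵢ x² + dⱼ y²)`. -/
def weightedRotation (d : ι → F) (i j : ι) (x y : F) : Matrix ι ι F := fun k =>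
  if k = i then Pi.single i x + Pi.single j y
  else if k = j then Pi.single i (-(d j * y)) + Pi.single j (d i * x)
  else Pi.single k 1

theorem weightedRotation_mul_diagonal_mul_transpose (d : ι → F) {i j : ι} {x y : F}
    (hij : i ≠ j) (hxy : d i * x ^ 2 + d j * y ^ 2 = 1) :
    weightedRotation d i j x y * diagonal d * (weightedRotation d i j x y)ᵀ =
      diagonal (update (update d i 1) j (d i * d j)) := by
  ext k l
  rw [mul_diagonal_mul_transpose_apply]
  simp only [weightedRotation]
  split_ifs <;> subst_vars <;>
    simp [Pi.single_apply, diagonal_apply, add_dotProduct, hij, hij.symm] <;> grind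

theorem congruent_diagonal_update_update {d : ι → F} (hd : ∀ p, d p ≠ 0) {i j : ι}
    (hij : i ≠ j) {x y : F} (hxy : d i * x ^ 2 + d j * y ^ 2 = 1) :
    (diagonal d).Congruent (diagonal (update (update d i 1) j (d i * d j))) := by
  have hM := weightedRotation_mul_diagonal_mul_transpose d hij hxy
  refine ⟨(weightedRotation d i j x y)ᵀ, ?_, by rwa [transpose_transpose]⟩
  have hdet := congrArg det hM
  rw [det_mul, det_mul, det_transpose, det_diagonal, det_diagonal] at hdet
  have hprod : ∏ p, update (update d i 1) j (d i * d j) p ≠ 0 :=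
    Finset.prod_ne_zero_iff.2 fun p _ => update_update_mul_ne_zero hd i j p
  rw [det_transpose, isUnit_iff_ne_zero]
  exact left_ne_zero_of_mul (left_ne_zero_of_mul (hdet ▸ hprod))

theorem congruent_diagonal_mulSingle_sq_mul (i : ι) (c : F) {s : F} (hs : s ≠ 0) :
    (diagonal (Pi.mulSingle i c)).Congruent (diagonal (Pi.mulSingle i (s ^ 2 * c))) := by
  refine ⟨diagonal (Pi.mulSingle i s), by simp [det_diagonal, hs], ?_⟩
  rw [diagonal_transpose, diagonal_mul_diagonal, diagonal_mul_diagonal]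
  congr 1
  ext p
  rcases eq_or_ne p i with rfl | hp <;> simp [*]
  ring

end Field

section FiniteField

variable {F : Type*} [Field F] [Fintype F] {ι : Type*} [Fintype ι] [DecidableEq ι]

theorem exists_diagonal_congruent_diagonal_mulSingle (hF : Fintype.card F % 2 = 1)
    (i₀ : ι) {d : ι → F} (hd : ∀ p, d p ≠ 0) :
    ∃ c, (diagonal d).Congruent (diagonal (Pi.mulSingle i₀ c)) := by
  suffices ∀ s : Finset ι, ∀ d : ι → F, (∀ p, d p ≠ 0) → (∀ p ∉ s, p ≠ i₀ → d p = 1) →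
      ∃ c, (diagonal d).Congruent (diagonal (Pi.mulSingle i₀ c)) from
    this Finset.univ d hd (by simp)
  intro s
  induction s using Finset.induction_on with
  | empty =>
    intro d _ hd1
    refine ⟨d i₀, ?_⟩
    convert Congruent.refl (diagonal d)
    ext p
    rcases eq_or_ne p i₀ with rfl | hp
    · simp
    · simp [hp, hd1 p (Finset.notMem_empty p) hp]
  | insert a s _ ih =>
    intro d hd hd1
    rcases eq_or_ne a i₀ with rfl | ha
    · exact ih d hd fun p hp hpa => hd1 p (by simp [hp, hpa]) hpa
    obtain ⟨x, y, hxy⟩ := FiniteField.exists_mul_sq_add_mul_sq_eq_one hF (hd a) (hd i₀)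
    obtain ⟨c, hc⟩ := ih (update (update d a 1) i₀ (d a * d i₀))
      (update_update_mul_ne_zero hd a i₀)
      (fun p hp hpi₀ => by simp only [update_apply]; split_ifs <;> simp_all)
    exact ⟨c, (congruent_diagonal_update_update hd ha hxy).trans hc⟩

theorem exists_congruent_diagonal_mulSingle (hF : Fintype.card F % 2 = 1) (i₀ : ι)
    {A : Matrix ι ι F} (hA : A.IsSymm) (hAdet : IsUnit A.det) :
    ∃ c, A.Congruent (diagonal (Pi.mulSingle i₀ c)) := by
  have : Invertible (2 : F) := invertibleOfNonzero <| Ring.two_ne_zero fun h => by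
    simp [FiniteField.even_card_iff_char_two.1 h] at hF
  obtain ⟨d, hAd⟩ := exists_congruent_diagonal hA
  obtain ⟨u, hu, hdet⟩ := hAd.exists_det_eq
  have hprod : ∏ p, d p ≠ 0 := by
    rw [← det_diagonal, hdet]
    exact mul_ne_zero (pow_ne_zero _ hu.ne_zero) hAdet.ne_zero
  obtain ⟨c, hc⟩ := exists_diagonal_congruent_diagonal_mulSingle hF i₀
    fun p => Finset.prod_ne_zero_iff.1 hprod p (Finset.mem_univ p)
  exact ⟨c, hAd.trans hc⟩

end FiniteField

end Matrix

open Matrix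

theorem stmt_13 (F : Type*) [Field F] [Fintype F] (hodd : Odd (Fintype.card F))
    (n : ℕ) (hn : 1 ≤ n) (A B : Matrix (Fin n) (Fin n) F)
    (hAsymm : Aᵀ = A) (hBsymm : Bᵀ = B)
    (hAunit : IsUnit A.det) (hBunit : IsUnit B.det) :
    (∃ g : Matrix (Fin n) (Fin n) F, IsUnit g.det ∧ gᵀ * A * g = B) ↔
      IsSquare (A.det / B.det) := by
  constructor
  · intro hAB
    obtain ⟨u, hu, hdet⟩ := Congruent.exists_det_eq hAB
    exact ⟨u⁻¹, by rw [hdet]; field_simp [hu.ne_zero, hAunit.ne_zero]⟩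
  · rintro ⟨t, ht⟩
    have hF : Fintype.card F % 2 = 1 := Nat.odd_iff.1 hodd
    let i₀ : Fin n := ⟨0, hn⟩
    obtain ⟨a, hA⟩ := exists_congruent_diagonal_mulSingle hF i₀ hAsymm hAunit
    obtain ⟨b, hB⟩ := exists_congruent_diagonal_mulSingle hF i₀ hBsymm hBunit
    obtain ⟨u, hu, ha⟩ := hA.exists_det_eq
    obtain ⟨v, hv, hb⟩ := hB.exists_det_eq
    rw [det_diagonal, Fintype.prod_pi_mulSingle'] at ha hb
    rw [div_eq_iff hBunit.ne_zero] at ht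
    have hab : a = (u * t / v) ^ 2 * b := by
      rw [ha, hb, ht]
      field_simp [hv.ne_zero]
    have ht0 : t ≠ 0 := by
      rintro rfl
      simp [hAunit.ne_zero] at ht
    rw [hab] at hA
    exact hA.trans ((congruent_diagonal_mulSingle_sq_mul i₀ b
      (div_ne_zero (mul_ne_zero hu.ne_zero ht0) hv.ne_zero)).symm.trans hB.symm)
end
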